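/- Let G ⊆ [-∞,∞]^X be a proper, point-separating complete subspace and let Ḡ_inf denote its inf-closure (the set of arbitrary pointwise infima of families in G). Then Ḡ_inf = { inf_{x ∈ X} (e_x + w_x) | w_x ∈ [-∞,∞] } and for every x, e_x = sup{ u ∈ Ḡ_inf | u(x) < 0 }, where e_x = sup{u ∈ G | u(x) ≤ 0}. -/

import Mathlib

open scoped Classical

/-- `G` is stable under arbitrary pointwise suprema. -/
def SupStable {X : Type*} (G : Set (X → EReal)) : Prop :=
  ∀ S : Set (X → EReal), S ⊆ G → (fun x => ⨆ f ∈ S, f x) ∈ G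

/-- A complete subspace: stable under arbitrary suprema and addition of real scalars. -/
def CompleteSubspace {X : Type*} (G : Set (X → EReal)) : Prop :=
  SupStable G ∧ ∀ g ∈ G, ∀ l : ℝ, (fun x => g x + (l : EReal)) ∈ G

/-- `G` is proper: at every point some function of `G` takes a finite value. -/
def ProperAt {X : Type*} (G : Set (X → EReal)) : Prop :=
  ∀ x : X, ∃ g ∈ G, g x ≠ ⊤ ∧ g x ≠ ⊥

/-- `G` is point separating. -/
def Separating {X : Type*} (G : Set (X → EReal)) : Prop :=
  ∀ x x' : X, x ≠ x' → ∃ g₁ ∈ G, ∃ g₂ ∈ G, ∃ a₁ b₁ a₂ b₂ : ℝ,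
    g₁ x = (a₁ : EReal) ∧ g₁ x' = (b₁ : EReal) ∧ g₂ x = (a₂ : EReal) ∧ g₂ x' = (b₂ : EReal) ∧
    a₁ - b₁ ≠ a₂ - b₂

/-- `e_x = sup { u ∈ G | u(x) ≤ 0 }`. -/
noncomputable def eFun {X : Type*} (G : Set (X → EReal)) (x : X) : X → EReal :=
  fun z => ⨆ u ∈ {u | u ∈ G ∧ u x ≤ 0}, u z

/-- Addition on `EReal` with `+∞` absorbing. -/
noncomputable def tadd (a b : EReal) : EReal := if a = ⊤ ∨ b = ⊤ then ⊤ else a + b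

/-- The inf-closure of `G`: arbitrary pointwise infima of families in `G`. -/
def infClos {X : Type*} (G : Set (X → EReal)) : Set (X → EReal) :=
  {f | ∃ S : Set (X → EReal), S ⊆ G ∧ f = fun x => ⨅ g ∈ S, g x}

/-! The infimum formula rests on `tadd a b = inf {a + l | l real, b < l}`: a function `g ∈ G`
with `g x ≤ l` translates to `g - l ∈ G`, which is `≤ 0` at `x` and hence below `e_x`; so
`g ≤ e_x + l`, and this passes to infima of families in `G`. Taking `w = f` and evaluating at
`y = x` (where `e_x x = 0` by properness) recovers any `f` of the inf-closure, while conversely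
`inf_x (e_x +' w_x)` is the infimum of the translates `e_x + l`, `l > w_x`, all of which lie in
`G`. The translates `e_x - ε` also give the supremum formula for `e_x`. -/

lemma tadd_eq_iInf (a b : EReal) : tadd a b = ⨅ (l : ℝ) (_ : b < l), a + l := by
  unfold tadd
  split_ifs with h
  · rcases h with rfl | rfl <;> simp
  · push Not at h
    refine le_antisymm (le_iInf₂ fun l hl => add_le_add_right hl.le a) ?_
    refine EReal.le_add_of_forall_gt (.inr h.2) (.inl h.1) fun a' ha' b' hb' => ?_
    obtain ⟨l, hbl, hlb'⟩ := EReal.exists_between_coe_real hb'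
    exact (iInf₂_le l hbl).trans (add_le_add ha'.le hlb'.le)

lemma zero_tadd (b : EReal) : tadd 0 b = b := by
  unfold tadd
  split_ifs with h
  · exact (h.resolve_left EReal.zero_ne_top).symm
  · exact zero_add b

lemma EReal.le_of_forall_pos_sub_le {a b : EReal} (h : ∀ ε : ℝ, 0 < ε → a - ε ≤ b) : a ≤ b := by
  refine EReal.ge_of_forall_gt_iff_ge.1 fun c hc => ?_
  obtain ⟨t, hct, hta⟩ := EReal.exists_between_coe_real hc
  refine le_trans ?_ (h (t - c) (by exact_mod_cast sub_pos.2 hct))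
  rw [EReal.le_sub_iff_add_le (.inl (EReal.coe_ne_bot _)) (.inl (EReal.coe_ne_top _)),
    ← EReal.coe_add, add_sub_cancel]
  exact hta.le

section eFun

variable {X : Type*} {G : Set (X → EReal)}

lemma SupStable.eFun_mem (hG : SupStable G) (x : X) : eFun G x ∈ G :=
  hG {u | u ∈ G ∧ u x ≤ 0} fun _ hu => hu.1

lemma le_eFun {u : X → EReal} {x : X} (hu : u ∈ G) (hux : u x ≤ 0) (z : X) :
    u z ≤ eFun G x z :=
  le_iSup₂_of_le u ⟨hu, hux⟩ le_rfl

end eFun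

namespace CompleteSubspace

variable {X : Type*} {G : Set (X → EReal)}

lemma sub_coe_mem (hG : CompleteSubspace G) {g : X → EReal} (hg : g ∈ G) (l : ℝ) :
    (fun y => g y - l) ∈ G := by
  simpa only [sub_eq_add_neg, EReal.coe_neg] using hG.2 g hg (-l)

lemma le_eFun_add (hG : CompleteSubspace G) {g : X → EReal} (hg : g ∈ G) {x : X} {l : ℝ}
    (hl : g x ≤ l) (y : X) : g y ≤ eFun G x y + l := by
  have hsub : ∀ {a c : EReal}, a - l ≤ c ↔ a ≤ c + l := fun {a c} =>
    EReal.sub_le_iff_le_add (.inl (EReal.coe_ne_bot l)) (.inl (EReal.coe_ne_top l))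
  refine hsub.1 (le_eFun (hG.sub_coe_mem hg l) (hsub.2 ?_) y)
  rwa [zero_add]

lemma eFun_self (hG : CompleteSubspace G) (hprop : ProperAt G) (x : X) : eFun G x x = 0 := by
  refine le_antisymm (iSup₂_le fun u hu => hu.2) ?_
  obtain ⟨g, hg, hgt, hgb⟩ := hprop x
  lift g x to ℝ using ⟨hgt, hgb⟩ with r hr
  have hzero : g x - r = 0 := by rw [← hr, ← EReal.coe_sub, sub_self, EReal.coe_zero]
  exact hzero ▸ le_eFun (hG.sub_coe_mem hg r) hzero.le x

lemma le_eFun_add_of_mem_infClos (hG : CompleteSubspace G) {f : X → EReal}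
    (hf : f ∈ infClos G) {x : X} {l : ℝ} (hl : f x < l) (y : X) : f y ≤ eFun G x y + l := by
  obtain ⟨S, hS, rfl⟩ := hf
  obtain ⟨g, hl⟩ := iInf_lt_iff.1 hl
  obtain ⟨hgS, hgl⟩ := iInf_lt_iff.1 hl
  exact (iInf₂_le g hgS).trans (hG.le_eFun_add (hS hgS) hgl.le y)

lemma eq_iInf_tadd_eFun (hG : CompleteSubspace G) (hprop : ProperAt G) {f : X → EReal}
    (hf : f ∈ infClos G) : f = fun y => ⨅ x, tadd (eFun G x y) (f x) := by
  funext y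
  refine le_antisymm (le_iInf fun x => ?_) (iInf_le_of_le y ?_)
  · rw [tadd_eq_iInf]
    exact le_iInf₂ fun l hl => hG.le_eFun_add_of_mem_infClos hf hl y
  · rw [hG.eFun_self hprop, zero_tadd]

lemma iInf_tadd_eFun_mem_infClos (hG : CompleteSubspace G) (w : X → EReal) :
    (fun y => ⨅ x, tadd (eFun G x y) (w x)) ∈ infClos G := by
  refine ⟨{g | ∃ x, ∃ l : ℝ, w x < l ∧ g = fun y => eFun G x y + l}, ?_, ?_⟩
  · rintro g ⟨x, l, -, rfl⟩
    exact hG.2 _ (hG.1.eFun_mem x) l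
  · funext y
    simp_rw [tadd_eq_iInf]
    refine le_antisymm (le_iInf₂ ?_) (le_iInf fun x => le_iInf₂ fun l hl => ?_)
    · rintro g ⟨x, l, hl, rfl⟩
      exact iInf_le_of_le x (iInf₂_le l hl)
    · exact iInf₂_le (fun y => eFun G x y + l) ⟨x, l, hl, rfl⟩

lemma eFun_eq_iSup (hG : CompleteSubspace G) (hprop : ProperAt G) (x : X) :
    eFun G x = fun z => ⨆ u ∈ {u | u ∈ infClos G ∧ u x < 0}, u z := by
  funext z
  refine le_antisymm (EReal.le_of_forall_pos_sub_le fun ε hε => ?_) (iSup₂_le fun u hu => ?_)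
  · have hmem : (fun y => eFun G x y - ε) ∈ infClos G :=
      ⟨{fun y => eFun G x y - ε}, by simpa using hG.sub_coe_mem (hG.1.eFun_mem x) ε, by simp⟩
    refine le_iSup₂_of_le (fun y => eFun G x y - ε) ⟨hmem, ?_⟩ le_rfl
    show eFun G x x - ε < 0
    rw [hG.eFun_self hprop, zero_sub, EReal.neg_lt_zero]
    exact_mod_cast hε
  · simpa using hG.le_eFun_add_of_mem_infClos hu.1 (l := 0) (by simpa using hu.2) z

end CompleteSubspace

theorem stmt6_general {X : Type*} (G : Set (X → EReal)) (hG : CompleteSubspace G)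
    (hprop : ProperAt G) :
    infClos G =
      {f | ∃ w : X → EReal, f = fun y => ⨅ x, tadd (eFun G x y) (w x)} ∧
    ∀ x, eFun G x = fun z => ⨆ u ∈ {u | u ∈ infClos G ∧ u x < 0}, u z := by
  refine ⟨Set.ext fun f => ⟨fun hf => ⟨f, hG.eq_iInf_tadd_eFun hprop hf⟩, ?_⟩,
    hG.eFun_eq_iSup hprop⟩
  rintro ⟨w, rfl⟩
  exact hG.iInf_tadd_eFun_mem_infClos w

theorem stmt6 {X : Type*} [Nonempty X] (G : Set (X → EReal)) (hG : CompleteSubspace G)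
    (hprop : ProperAt G) (hsep : Separating G) :
    infClos G =
      {f | ∃ w : X → EReal, f = fun y => ⨅ x, tadd (eFun G x y) (w x)} ∧
    ∀ x, eFun G x = fun z => ⨆ u ∈ {u | u ∈ infClos G ∧ u x < 0}, u z :=
  stmt6_general G hG hprop
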